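/- arXiv:2402.10369 — 2 statements merged into one kernel-verified Lean document; each statement's English description precedes it below -/
import Mathlib

section
/- Let V be a finite-dimensional vector space over a field k. The natural pairing between V and V* induces a perfect pairing between the n-th divided power Sym^{PD,n}(V) := (V^{⊗n})^{S_n} (symmetric tensors, i.e. S_n-invariants of V^{⊗n}) and the n-th symmetric power Sym^n(V*), given by ⟨v_1⊗···⊗v_n, f_1···f_n⟩ = Σ_{σ∈S_n} Π_i f_i(v_{σ(i)}) restricted to invariant tensors. In particular both spaces have the same dimension binom(dim V + n - 1, n) and the pairing is nondegenerate in arbitrary characteristic. -/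
/-!
Fix a basis of `V` indexed by `Fin d`. The induced bases of `V^{⊗n}` and `(V*)^{⊗n}` are indexed
by tuples `Fin n → Fin d`, and `S_n` permutes both by permuting the tuples. For any permutation
module, the orbit sums of the basis are independent invariants and the classes of orbit
representatives span the coinvariants; the orbits of tuples are the multisets of size `n`, of
which there are `C(d + n - 1, n)`. The pairing `(V*)^{⊗n} ≅ (V^{⊗n})*` is perfect, so its
restriction to symmetric tensors descends to a surjection `Sym^n(V*) → (Sym^{PD,n} V)*`, and
`#orbits ≤ dim Sym^{PD,n} V ≤ dim Sym^n(V*) ≤ #orbits` forces it to be bijective.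
-/

open scoped TensorProduct
open PiTensorProduct

noncomputable section

variable (k : Type*) [Field k] (V : Type*) [AddCommGroup V] [Module k V]
  [FiniteDimensional k V] (n : ℕ)

/-- Permutation of tensor factors on `V^{⊗n}`. -/
def permV (e : Equiv.Perm (Fin n)) : (⨂[k] _ : Fin n, V) →ₗ[k] (⨂[k] _ : Fin n, V) :=
  (PiTensorProduct.reindex k (fun _ : Fin n => V) e).toLinearMap

/-- Symmetric tensors `Sym^{PD,n}(V) = (V^{⊗n})^{S_n}`. -/
def symPD : Submodule k (⨂[k] _ : Fin n, V) :=
  ⨅ e : Equiv.Perm (Fin n), LinearMap.eqLocus (permV k V n e) LinearMap.id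

/-- Permutation of tensor factors on `(V*)^{⊗n}`. -/
def permD (e : Equiv.Perm (Fin n)) :
    (⨂[k] _ : Fin n, (V →ₗ[k] k)) →ₗ[k] (⨂[k] _ : Fin n, (V →ₗ[k] k)) :=
  (PiTensorProduct.reindex k (fun _ : Fin n => Module.Dual k V) e).toLinearMap

instance symPowDualTensorAddCommGroup : AddCommGroup (⨂[k] _ : Fin n, (V →ₗ[k] k)) :=
  Module.addCommMonoidToAddCommGroup k

/-- The submodule by which one divides to get `Sym^n(V*)`: the span of the elements
`x - e·x`. -/
def symRelations : Submodule k (⨂[k] _ : Fin n, (V →ₗ[k] k)) :=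
  ⨆ e : Equiv.Perm (Fin n),
    LinearMap.range ((permD k V n e - (LinearMap.id :
        (⨂[k] _ : Fin n, (V →ₗ[k] k)) →ₗ[k] (⨂[k] _ : Fin n, (V →ₗ[k] k))) :
      (⨂[k] _ : Fin n, (V →ₗ[k] k)) →ₗ[k] (⨂[k] _ : Fin n, (V →ₗ[k] k))))

/-- The natural pairing `(V*)^{⊗n} → (V^{⊗n})*`, `f₁⊗⋯⊗fₙ ↦ (v₁⊗⋯⊗vₙ ↦ Π f_i(v_i))`. -/
def naturalPairing :
    (⨂[k] _ : Fin n, (V →ₗ[k] k)) →ₗ[k] Module.Dual k (⨂[k] _ : Fin n, V) :=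
  (LinearMap.llcomp k (⨂[k] _ : Fin n, V) (⨂[k] _ : Fin n, k) k
      (PiTensorProduct.lift (MultilinearMap.mkPiAlgebra k (Fin n) k))).comp
    PiTensorProduct.piTensorHomMap

end

open Module MulAction

-- `Equiv.Perm ι` acts on tuples `ι → α` by `σ • f = f ∘ σ⁻¹`, as on the tensor factors.
attribute [local instance] arrowAction

section PermutationModule

variable {k M X G : Type*} [Field k] [AddCommGroup M] [Module k M] [Group G] [MulAction G X]
  (b : Basis X k M) (T : G → M →ₗ[k] M)

theorem card_orbits_le_finrank_invariants [Fintype X] (hT : ∀ g x, T g (b x) = b (g • x)) :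
    Nat.card (orbitRel.Quotient G X) ≤
      finrank k ↥(⨅ g, LinearMap.eqLocus (T g) LinearMap.id) := by
  classical
  have := Module.Finite.of_basis b
  let orbitSum : (orbitRel.Quotient G X → k) →ₗ[k] M :=
    b.equivFun.symm.toLinearMap ∘ₗ LinearMap.funLeft k k (fun x => ⟦x⟧)
  have orbitSum_apply (c) : orbitSum c = ∑ x, c ⟦x⟧ • b x := by
    simp [orbitSum, LinearMap.funLeft_apply]
  have orbitSum_injective : Function.Injective orbitSum :=
    b.equivFun.symm.injective.comp
      (LinearMap.funLeft_injective_of_surjective _ _ _ Quotient.mk_surjective)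
  have range_le : LinearMap.range orbitSum ≤ ⨅ g, LinearMap.eqLocus (T g) LinearMap.id := by
    rintro _ ⟨c, rfl⟩
    simp only [Submodule.mem_iInf, LinearMap.mem_eqLocus, LinearMap.id_apply]
    intro g
    simp only [orbitSum_apply, map_sum, map_smul, hT]
    conv_lhs => enter [2, x]; rw [← orbitRel.Quotient.quotient_smul_eq (g := g)]
    exact Equiv.sum_comp (MulAction.toPerm g) (fun y => c ⟦y⟧ • b y)
  calc Nat.card (orbitRel.Quotient G X)
      = finrank k (LinearMap.range orbitSum) := by
        rw [LinearMap.finrank_range_of_inj orbitSum_injective, Module.finrank_pi,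
          Nat.card_eq_fintype_card]
    _ ≤ _ := Submodule.finrank_mono range_le

theorem finrank_coinvariants_le_card_orbits [Finite X] (hT : ∀ g x, T g (b x) = b (g • x)) :
    finrank k (M ⧸ ⨆ g, LinearMap.range (T g - LinearMap.id)) ≤
      Nat.card (orbitRel.Quotient G X) := by
  classical
  have := Fintype.ofFinite (orbitRel.Quotient G X)
  set R := ⨆ g, LinearMap.range (T g - LinearMap.id)
  have mk_out (x : X) : R.mkQ (b (⟦x⟧ : orbitRel.Quotient G X).out) = R.mkQ (b x) := by
    obtain ⟨g, hg⟩ : (⟦x⟧ : orbitRel.Quotient G X).out ∈ orbit G x :=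
      orbitRel_apply.mp (Quotient.mk_out x)
    rw [← hg, ← hT, Submodule.mkQ_apply, Submodule.mkQ_apply, Submodule.Quotient.eq]
    exact Submodule.mem_iSup_of_mem g ⟨b x, rfl⟩
  have span_eq :
      Submodule.span k (Set.range fun q : orbitRel.Quotient G X => R.mkQ (b q.out)) = ⊤ := by
    rw [eq_top_iff, ← R.range_mkQ, LinearMap.range_eq_map, ← b.span_eq, Submodule.map_span,
      Submodule.span_le]
    rintro _ ⟨_, ⟨x, rfl⟩, rfl⟩
    exact Submodule.subset_span ⟨⟦x⟧, mk_out x⟩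
  calc finrank k (M ⧸ R)
      = Set.finrank k (Set.range fun q : orbitRel.Quotient G X => R.mkQ (b q.out)) := by
        rw [Set.finrank, span_eq, finrank_top]
    _ ≤ _ := by rw [Nat.card_eq_fintype_card]; exact finrank_range_le_card _

end PermutationModule

section TupleOrbits

variable {α : Type*} {n : ℕ}

def Sym.ofFn (f : Fin n → α) : Sym α n := ⟨Finset.univ.val.map f, by simp⟩

theorem Sym.ofFn_perm_smul (σ : Equiv.Perm (Fin n)) (f : Fin n → α) :
    Sym.ofFn (σ • f) = Sym.ofFn f := by
  apply Subtype.ext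
  change Finset.univ.val.map (f ∘ ⇑(σ⁻¹ : Equiv.Perm (Fin n))) = Finset.univ.val.map f
  rw [← Multiset.map_map, Multiset.map_univ_val_equiv]

theorem Sym.exists_perm_smul_eq_of_ofFn_eq {f g : Fin n → α} (h : Sym.ofFn f = Sym.ofFn g) :
    ∃ σ : Equiv.Perm (Fin n), σ • f = g := by
  classical
  have card_fiber (a : α) : Fintype.card {i // g i = a} = Fintype.card {i // f i = a} := by
    have := congrArg (fun s : Sym α n => Multiset.count a s.1) h
    simp only [Sym.ofFn, Multiset.count_map, eq_comm (a := a)] at this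
    rw [Fintype.card_subtype, Fintype.card_subtype]
    exact this.symm
  let σ := Equiv.ofFiberEquiv fun a => Fintype.equivOfCardEq (card_fiber a)
  refine ⟨σ⁻¹, funext fun i => ?_⟩
  change f (σ⁻¹⁻¹ i) = g i
  rw [inv_inv]
  exact Equiv.ofFiberEquiv_map _ i

theorem Sym.ofFn_surjective : Function.Surjective (Sym.ofFn : (Fin n → α) → Sym α n) := by
  rintro ⟨s, hs⟩
  induction s using Quotient.inductionOn with | h l => ?_
  obtain rfl : l.length = n := hs
  refine ⟨fun i => l[i], Subtype.ext ?_⟩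
  simp [Sym.ofFn]

noncomputable def orbitRelQuotientEquivSym :
    orbitRel.Quotient (Equiv.Perm (Fin n)) (Fin n → α) ≃ Sym α n :=
  Equiv.ofBijective (Quotient.lift Sym.ofFn fun _ _ ⟨σ, hσ⟩ => hσ ▸ Sym.ofFn_perm_smul σ _)
    ⟨fun p q => Quotient.inductionOn₂ p q fun _ _ h =>
      Quotient.sound (Sym.exists_perm_smul_eq_of_ofFn_eq h.symm),
    fun s => let ⟨f, hf⟩ := Sym.ofFn_surjective s; ⟨⟦f⟧, hf⟩⟩

theorem card_tuple_orbits_eq_choose [Fintype α] :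
    Nat.card (orbitRel.Quotient (Equiv.Perm (Fin n)) (Fin n → α)) =
      (Fintype.card α + n - 1).choose n := by
  classical
  rw [Nat.card_congr orbitRelQuotientEquivSym, Nat.card_eq_fintype_card, Sym.card_sym_eq_choose]

end TupleOrbits

theorem PiTensorProduct.reindex_basis_piTensorProduct {k W ι κ : Type*} [CommSemiring k]
    [AddCommMonoid W] [Module k W] [Finite ι] (c : Basis κ k W) (e : Equiv.Perm ι) (f : ι → κ) :
    reindex k (fun _ => W) e (Basis.piTensorProduct (fun _ => c) f) =
      Basis.piTensorProduct (fun _ => c) (e • f) := by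
  simp only [Basis.piTensorProduct_apply, reindex_tprod]
  rfl

noncomputable section NaturalPairing

variable (k : Type*) [Field k] (V : Type*) [AddCommGroup V] [Module k V] (n : ℕ)

theorem permV_basis_piTensorProduct {ι : Type*} (b : Basis ι k V) (e : Equiv.Perm (Fin n))
    (f : Fin n → ι) :
    permV k V n e (Basis.piTensorProduct (fun _ => b) f) =
      Basis.piTensorProduct (fun _ => b) (e • f) :=
  reindex_basis_piTensorProduct b e f

theorem permD_basis_piTensorProduct {ι : Type*} (b : Basis ι k (Dual k V))
    (e : Equiv.Perm (Fin n)) (f : Fin n → ι) :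
    permD k V n e (Basis.piTensorProduct (fun _ => b) f) =
      Basis.piTensorProduct (fun _ => b) (e • f) :=
  reindex_basis_piTensorProduct b e f

theorem naturalPairing_tprod (φ : Fin n → Dual k V) (v : Fin n → V) :
    naturalPairing k V n (tprod k φ) (tprod k v) = ∏ i, φ i (v i) := by
  simp [naturalPairing, piTensorHomMap_tprod_tprod, lift.tprod, MultilinearMap.mkPiAlgebra_apply]

theorem naturalPairing_eq_dualDistrib : naturalPairing k V n = dualDistrib := by
  ext φ v
  simp [naturalPairing_tprod]

theorem naturalPairing_bijective [FiniteDimensional k V] :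
    Function.Bijective (naturalPairing k V n) := by
  rw [naturalPairing_eq_dualDistrib]
  exact (dualDistribEquiv (R := k) (M := fun _ : Fin n => V)).bijective

theorem naturalPairing_comp_permD (e : Equiv.Perm (Fin n)) :
    naturalPairing k V n ∘ₗ permD k V n e = (permV k V n e⁻¹).dualMap ∘ₗ naturalPairing k V n := by
  ext φ v
  simp only [permD, permV, LinearMap.compMultilinearMap_apply, LinearMap.comp_apply,
    LinearMap.dualMap_apply, LinearEquiv.coe_coe, reindex_tprod, naturalPairing_tprod,
    Equiv.Perm.inv_def, Equiv.symm_symm]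
  rw [← Equiv.prod_comp e]
  refine Finset.prod_congr rfl fun i _ => ?_
  rw [Equiv.symm_apply_apply]

theorem naturalPairing_apply_eq_zero {x : ⨂[k] _ : Fin n, Dual k V} (hx : x ∈ symRelations k V n)
    {t : ⨂[k] _ : Fin n, V} (ht : t ∈ symPD k V n) : naturalPairing k V n x t = 0 := by
  induction hx using Submodule.iSup_induction' with
  | mem e _ hy =>
    obtain ⟨y, rfl⟩ := hy
    have ht' : permV k V n e⁻¹ t = t := Submodule.mem_iInf _ |>.mp ht e⁻¹
    simp only [LinearMap.sub_apply, LinearMap.id_apply, map_sub]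
    rw [← LinearMap.comp_apply (naturalPairing k V n), naturalPairing_comp_permD]
    simp [ht']
  | zero => simp
  | add _ _ _ _ hx hy => simp [hx, hy]

def symPairing :
    ((⨂[k] _ : Fin n, (V →ₗ[k] k)) ⧸ symRelations k V n) →ₗ[k] Dual k (symPD k V n) :=
  (symRelations k V n).liftQ ((symPD k V n).subtype.dualMap ∘ₗ naturalPairing k V n)
    fun _ hx => LinearMap.ext fun t => naturalPairing_apply_eq_zero k V n hx t.2

theorem symPairing_mk (f : ⨂[k] _ : Fin n, (V →ₗ[k] k)) (t : symPD k V n) :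
    symPairing k V n (Submodule.Quotient.mk f) t = naturalPairing k V n f t :=
  rfl

theorem symPairing_surjective [FiniteDimensional k V] : Function.Surjective (symPairing k V n) :=
  .of_comp (g := (symRelations k V n).mkQ) <|
    (LinearMap.dualMap_surjective_of_injective (symPD k V n).injective_subtype).comp
      (naturalPairing_bijective k V n).surjective

end NaturalPairing

variable (k : Type*) [Field k] (V : Type*) [AddCommGroup V] [Module k V]
  [FiniteDimensional k V] (n : ℕ)

theorem symPow_dual_perfect_pairing :
    -- the natural pairing kills the symmetrization relations against symmetric tensors,
    -- hence descends to a pairing `Sym^n(V*) × Sym^{PD,n}(V) → k` ...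
    (∀ x ∈ symRelations k V n, ∀ t ∈ symPD k V n, naturalPairing k V n x t = 0) ∧
    -- ... which is perfect:
    (∃ B : ((⨂[k] _ : Fin n, (V →ₗ[k] k)) ⧸ symRelations k V n) →ₗ[k]
        Module.Dual k (symPD k V n),
      (∀ (f : ⨂[k] _ : Fin n, (V →ₗ[k] k)) (t : symPD k V n),
        B (Submodule.Quotient.mk f) t = naturalPairing k V n f t) ∧
      Function.Bijective B) ∧
    -- in particular both spaces have dimension `C(dim V + n - 1, n)`:
    Module.finrank k (symPD k V n) = (Module.finrank k V + n - 1).choose n ∧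
    Module.finrank k ((⨂[k] _ : Fin n, (V →ₗ[k] k)) ⧸ symRelations k V n) =
      (Module.finrank k V + n - 1).choose n := by
  let b := Module.finBasis k V
  have card_orbits : Nat.card (orbitRel.Quotient (Equiv.Perm (Fin n)) (Fin n → Fin (finrank k V)))
      = (finrank k V + n - 1).choose n := by
    rw [card_tuple_orbits_eq_choose, Fintype.card_fin]
  have card_orbits_le : _ ≤ finrank k (symPD k V n) :=
    card_orbits_le_finrank_invariants _ _ (permV_basis_piTensorProduct k V n b)
  have le_card_orbits : finrank k ((⨂[k] _ : Fin n, (V →ₗ[k] k)) ⧸ symRelations k V n) ≤ _ :=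
    finrank_coinvariants_le_card_orbits _ _ (permD_basis_piTensorProduct k V n b.dualBasis)
  have finrank_symPD_le := (symPairing k V n).finrank_le_finrank_of_surjective
    (symPairing_surjective k V n)
  rw [Subspace.dual_finrank_eq] at finrank_symPD_le
  have finrank_eq : finrank k ((⨂[k] _ : Fin n, (V →ₗ[k] k)) ⧸ symRelations k V n) =
      finrank k (Dual k (symPD k V n)) := by
    rw [Subspace.dual_finrank_eq]
    omega
  refine ⟨fun x hx t ht => naturalPairing_apply_eq_zero k V n hx ht,
    ⟨symPairing k V n, symPairing_mk k V n,
      (LinearMap.injective_iff_surjective_of_finrank_eq_finrank finrank_eq).2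
        (symPairing_surjective k V n), symPairing_surjective k V n⟩, by omega, by omega⟩
end

section
/- The multilinear component Lie(n) of the free Lie algebra on x_1,...,x_n over any commutative ring k is a free k-module of rank (n-1)!, with basis the left-normed brackets [x_{σ(1)},[x_{σ(2)},[...,[x_{σ(n-1)},x_n]...]]] for σ ranging over the symmetric group S_{n-1}. -/
/-!
Spanning: for a multilinear monomial `x` not involving `x_e`, the Jacobi identity
`ad ⁅a, b⁆ = ad a ∘ ad b - ad b ∘ ad a` shows by induction on `x` that `ad x` sends left-normed brackets
`⁅x_{i₁}, ⁅…, ⁅x_{iᵣ}, x_e⁆…⁆⁆` to combinations of such brackets; with antisymmetry this writes every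
multilinear monomial involving `x_e` in terms of left-normed brackets ending in `x_e`.

Independence: expanding into the free associative algebra, `⁅x_j, y⁆ = x_j y - y x_j`, and the second
term only contributes words ending in `x_j ≠ x_e`. Hence among the words ending in `x_e`, the left-normed
bracket on `i₁ … iᵣ` contains exactly `x_{i₁} ⋯ x_{iᵣ} x_e`, with coefficient `1`.
-/

/-- `IsMultilinearLieMonomial s x` : `x` is a Lie monomial in which exactly the generators
indexed by `s` occur, each exactly once. -/
inductive IsMultilinearLieMonomial {k : Type*} [CommRing k] {n : ℕ} :
    Finset (Fin n) → FreeLieAlgebra k (Fin n) → Prop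
  | of (i : Fin n) : IsMultilinearLieMonomial {i} (FreeLieAlgebra.of k i)
  | bracket {s t : Finset (Fin n)} {x y : FreeLieAlgebra k (Fin n)} :
      IsMultilinearLieMonomial s x → IsMultilinearLieMonomial t y → Disjoint s t →
      IsMultilinearLieMonomial (s ∪ t) ⁅x, y⁆

/-- The multilinear part `Lie(n)` of the free Lie algebra. -/
noncomputable def LieOperadComponent (k : Type*) [CommRing k] (n : ℕ) :
    Submodule k (FreeLieAlgebra k (Fin n)) :=
  Submodule.span k {x | IsMultilinearLieMonomial Finset.univ x}

/-- The left-normed bracket `[x_{σ(1)},[...,[x_{σ(n-1)}, x_n]...]]` in the free Lie algebra. -/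
noncomputable def leftNormedBasisElt (k : Type*) [CommRing k] (m : ℕ)
    (σ : Equiv.Perm (Fin m)) : FreeLieAlgebra k (Fin (m + 1)) :=
  (List.finRange m).foldr (fun i acc => ⁅FreeLieAlgebra.of k (Fin.castSucc (σ i)), acc⁆)
    (FreeLieAlgebra.of k (Fin.last m))

section LeftNormed

variable (k : Type*) [CommRing k] {X : Type*}

noncomputable def leftNormed (e : X) (l : List X) : FreeLieAlgebra k X :=
  l.foldr (fun i y => ⁅FreeLieAlgebra.of k i, y⁆) (FreeLieAlgebra.of k e)

lemma leftNormed_nil (e : X) : leftNormed k e [] = FreeLieAlgebra.of k e := rfl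

lemma leftNormed_cons (e i : X) (l : List X) :
    leftNormed k e (i :: l) = ⁅FreeLieAlgebra.of k i, leftNormed k e l⁆ := rfl

attribute [local instance] LieRing.ofAssociativeRing

noncomputable def toWords : FreeLieAlgebra k X →ₗ⁅k⁆ MonoidAlgebra k (FreeMonoid X) :=
  FreeLieAlgebra.lift k fun x => MonoidAlgebra.single (FreeMonoid.of x) 1

lemma toWords_of (x : X) :
    toWords k (FreeLieAlgebra.of k x) = MonoidAlgebra.single (FreeMonoid.of x) 1 :=
  FreeLieAlgebra.lift_of_apply _ _

lemma toWords_lie (y z : FreeLieAlgebra k X) :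
    toWords k ⁅y, z⁆ = toWords k y * toWords k z - toWords k z * toWords k y := by
  rw [LieHom.map_lie, Ring.lie_def]

lemma coeff_toWords_leftNormed [DecidableEq X] {e : X} {l : List X} (he : e ∉ l) (l' : List X) :
    (toWords k (leftNormed k e l)).coeff (FreeMonoid.ofList (l' ++ [e])) =
      if l' = l then 1 else 0 := by
  induction l generalizing l' with
  | nil =>
    classical
    rw [leftNormed_nil, toWords_of, MonoidAlgebra.coeff_single, ← FreeMonoid.ofList_singleton,
      Finsupp.single_apply, FreeMonoid.ofList.apply_eq_iff_eq]
    simp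
  | cons j l ih =>
    simp only [List.mem_cons, not_or] at he
    obtain ⟨hej, he⟩ := he
    have hje : j ≠ e := Ne.symm hej
    have hright : (toWords k (leftNormed k e l) * MonoidAlgebra.single (FreeMonoid.of j) 1).coeff
        (FreeMonoid.ofList (l' ++ [e])) = 0 := by
      refine MonoidAlgebra.coeff_mul_single_of_forall_mul_ne _ _ fun w hw => hje ?_
      simpa using congrArg List.getLast? (congrArg FreeMonoid.toList hw)
    rw [leftNormed_cons, toWords_lie, toWords_of, MonoidAlgebra.coeff_sub, Finsupp.sub_apply,
      hright, sub_zero]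
    rcases l' with _ | ⟨j', l'⟩
    · refine (MonoidAlgebra.coeff_single_mul_of_forall_mul_ne _ _ fun w hw => hje ?_).trans
        (if_neg (List.cons_ne_nil _ _).symm).symm
      simpa using congrArg List.head? (congrArg FreeMonoid.toList hw)
    by_cases hj : j' = j
    · subst hj
      rw [List.cons_append, FreeMonoid.ofList_cons,
        MonoidAlgebra.coeff_single_mul_eq_mul_coeff _ fun w _ => mul_right_inj _, one_mul, ih he]
      simp
    · refine (MonoidAlgebra.coeff_single_mul_of_forall_mul_ne _ _ fun w hw => hj (Eq.symm ?_)).trans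
        (if_neg fun h => hj (List.cons_eq_cons.mp h).1).symm
      simpa using congrArg List.head? (congrArg FreeMonoid.toList hw)

lemma linearIndependent_leftNormed (e : X) :
    LinearIndependent k fun l : {l : List X // e ∉ l} => leftNormed k e l := by
  classical
  let coeffs : FreeLieAlgebra k X →ₗ[k] ({l : List X // e ∉ l} → k) :=
    LinearMap.funLeft k k (fun l => FreeMonoid.ofList (l.1 ++ [e])) ∘ₗ Finsupp.lcoeFun ∘ₗ
      (MonoidAlgebra.coeffLinearEquiv k).toLinearMap ∘ₗ (toWords k).toLinearMap
  refine LinearIndependent.of_comp coeffs ?_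
  convert Pi.linearIndependent_single_one {l : List X // e ∉ l} k with l
  ext l'
  simpa [coeffs, LinearMap.funLeft, Pi.single_apply, Subtype.ext_iff] using
    coeff_toWords_leftNormed k l.2 l'.1

end LeftNormed

section Spanning

variable (k : Type*) [CommRing k] {n : ℕ} (e : Fin n)

noncomputable def leftNormedSpan (t : Finset (Fin n)) : Submodule k (FreeLieAlgebra k (Fin n)) :=
  Submodule.span k
    {y | ∃ l : List (Fin n), (l.Nodup ∧ e ∉ l) ∧ insert e l.toFinset = t ∧ leftNormed k e l = y}

lemma isMultilinearLieMonomial_leftNormed {l : List (Fin n)} (hl : l.Nodup) (he : e ∉ l) :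
    IsMultilinearLieMonomial (insert e l.toFinset) (leftNormed k e l) := by
  induction l with
  | nil => exact .of e
  | cons i l ih =>
    simp only [List.nodup_cons, List.mem_cons, not_or] at hl he
    have hi : i ∉ insert e l.toFinset := by simpa [Ne.symm he.1] using hl.1
    rw [List.toFinset_cons, Finset.insert_comm, Finset.insert_eq]
    exact .bracket (.of i) (ih hl.2 he.2) (Finset.disjoint_singleton_left.mpr hi)

lemma leftNormedSpan_le_comap_ad {s t : Finset (Fin n)} {x : FreeLieAlgebra k (Fin n)}
    (hx : IsMultilinearLieMonomial s x) (he : e ∉ s) (hst : Disjoint s t) :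
    leftNormedSpan k e t ≤ (leftNormedSpan k e (s ∪ t)).comap (LieAlgebra.ad k _ x) := by
  induction hx generalizing t with
  | of i =>
    rw [leftNormedSpan, Submodule.span_le]
    rintro _ ⟨l, ⟨hl, hel⟩, rfl, rfl⟩
    have hi : i ∉ insert e l.toFinset := Finset.disjoint_singleton_left.mp hst
    have hei : e ≠ i := fun h => he (Finset.mem_singleton.mpr h)
    simp only [Finset.mem_insert, List.mem_toFinset, not_or] at hi
    refine Submodule.subset_span ⟨i :: l, ⟨List.nodup_cons.mpr ⟨hi.2, hl⟩, ?_⟩, ?_, rfl⟩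
    · simpa [hei] using hel
    · rw [List.toFinset_cons, Finset.insert_comm, Finset.insert_eq]
  | @bracket sa sb a b _ _ hab iha ihb =>
    rw [Finset.mem_union, not_or] at he
    rw [Finset.disjoint_union_left] at hst
    intro y hy
    have hab_y : ⁅a, ⁅b, y⁆⁆ ∈ leftNormedSpan k e (sa ∪ (sb ∪ t)) :=
      iha he.1 (Finset.disjoint_union_right.mpr ⟨hab, hst.1⟩) (ihb he.2 hst.2 hy)
    have hba_y : ⁅b, ⁅a, y⁆⁆ ∈ leftNormedSpan k e (sb ∪ (sa ∪ t)) :=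
      ihb he.2 (Finset.disjoint_union_right.mpr ⟨hab.symm, hst.2⟩) (iha he.1 hst.1 hy)
    rw [← Finset.union_assoc] at hab_y
    rw [Finset.union_left_comm, ← Finset.union_assoc] at hba_y
    simpa only [Submodule.mem_comap, LieAlgebra.ad_apply, lie_lie] using sub_mem hab_y hba_y

lemma mem_leftNormedSpan {s : Finset (Fin n)} {x : FreeLieAlgebra k (Fin n)}
    (hx : IsMultilinearLieMonomial s x) (he : e ∈ s) : x ∈ leftNormedSpan k e s := by
  induction hx with
  | of i =>
    obtain rfl := Finset.mem_singleton.mp he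
    exact Submodule.subset_span ⟨[], ⟨List.nodup_nil, List.not_mem_nil⟩, by simp, rfl⟩
  | @bracket sa sb a b ha hb hab iha ihb =>
    rcases Finset.mem_union.mp he with hea | heb
    · have hba : ⁅b, a⁆ ∈ leftNormedSpan k e (sb ∪ sa) :=
        leftNormedSpan_le_comap_ad k e hb (Finset.disjoint_left.mp hab hea) hab.symm (iha hea)
      rw [Finset.union_comm, ← lie_skew]
      exact neg_mem hba
    · exact leftNormedSpan_le_comap_ad k e ha (Finset.disjoint_right.mp hab heb) hab (ihb heb)

lemma span_isMultilinearLieMonomial_eq_leftNormedSpan {t : Finset (Fin n)} (he : e ∈ t) :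
    Submodule.span k {x | IsMultilinearLieMonomial t x} = leftNormedSpan k e t := by
  refine le_antisymm (Submodule.span_le.mpr fun x hx => mem_leftNormedSpan k e hx he)
    (Submodule.span_mono ?_)
  rintro _ ⟨l, ⟨hl, hel⟩, rfl, rfl⟩
  exact isMultilinearLieMonomial_leftNormed k e hl hel

end Spanning

section Permutations

variable (k : Type*) [CommRing k] {m : ℕ}

lemma leftNormedBasisElt_eq (σ : Equiv.Perm (Fin m)) :
    leftNormedBasisElt k m σ = leftNormed k (Fin.last m) (List.ofFn (Fin.castSucc ∘ σ)) := by
  simp [leftNormedBasisElt, leftNormed, List.ofFn_eq_map, List.foldr_map]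

lemma exists_perm_ofFn_castSucc_eq {l : List (Fin (m + 1))} (hl : l.Nodup)
    (hlast : Fin.last m ∉ l) (hcover : insert (Fin.last m) l.toFinset = Finset.univ) :
    ∃ σ : Equiv.Perm (Fin m), List.ofFn (Fin.castSucc ∘ σ) = l := by
  have hlen : l.length = m := by
    have := congrArg Finset.card hcover
    rw [Finset.card_insert_of_notMem (by simpa using hlast), List.toFinset_card_of_nodup hl,
      Finset.card_univ, Fintype.card_fin] at this
    omega
  have hne : ∀ j : Fin m, l[j] ≠ Fin.last m := fun j h => hlast (h ▸ List.getElem_mem _)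
  let τ : Fin m → Fin m := fun j => (l[j]).castPred (hne j)
  have hτ : τ.Injective := fun i j hij =>
    Fin.ext (hl.getElem_inj_iff.mp (Fin.castPred_inj.mp hij))
  refine ⟨Equiv.ofBijective τ hτ.bijective_of_finite, List.ext_getElem (by simp [hlen]) ?_⟩
  intro i _ _
  simp [τ]

lemma last_notMem_ofFn_castSucc (f : Fin m → Fin m) :
    Fin.last m ∉ List.ofFn (Fin.castSucc ∘ f) := by
  simp [List.mem_ofFn, Fin.castSucc_ne_last]

lemma leftNormedSpan_univ_eq_span_range :
    leftNormedSpan k (Fin.last m) Finset.univ =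
      Submodule.span k (Set.range (leftNormedBasisElt k m)) := by
  rw [leftNormedSpan]
  congr 1
  ext y
  constructor
  · rintro ⟨l, ⟨hl, hlast⟩, hcover, rfl⟩
    obtain ⟨σ, rfl⟩ := exists_perm_ofFn_castSucc_eq hl hlast hcover
    exact ⟨σ, leftNormedBasisElt_eq k σ⟩
  · rintro ⟨σ, rfl⟩
    refine ⟨_, ⟨?_, last_notMem_ofFn_castSucc σ⟩, ?_, (leftNormedBasisElt_eq k σ).symm⟩
    · exact List.nodup_ofFn.mpr ((Fin.castSucc_injective m).comp σ.injective)
    · refine Finset.eq_univ_of_forall fun i => ?_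
      cases i using Fin.lastCases with
      | last => exact Finset.mem_insert_self _ _
      | cast j => simpa [List.mem_ofFn] using ⟨σ.symm j, σ.apply_symm_apply j⟩

lemma linearIndependent_leftNormedBasisElt : LinearIndependent k (leftNormedBasisElt k m) := by
  let asList : Equiv.Perm (Fin m) → {l : List (Fin (m + 1)) // Fin.last m ∉ l} :=
    fun σ => ⟨List.ofFn (Fin.castSucc ∘ σ), last_notMem_ofFn_castSucc σ⟩
  have hinj : asList.Injective := fun σ τ h => Equiv.ext fun i =>
    Fin.castSucc_injective m (congrFun (List.ofFn_injective (congrArg Subtype.val h)) i)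
  convert (linearIndependent_leftNormed k (Fin.last m)).comp asList hinj
  exact funext (leftNormedBasisElt_eq k)

end Permutations

theorem lieOperad_free_of_rank_factorial (k : Type*) [CommRing k] (m : ℕ) :
    LinearIndependent k (leftNormedBasisElt k m) ∧
    Submodule.span k (Set.range (leftNormedBasisElt k m)) = LieOperadComponent k (m + 1) := by
  refine ⟨linearIndependent_leftNormedBasisElt k, ?_⟩
  rw [LieOperadComponent, span_isMultilinearLieMonomial_eq_leftNormedSpan k (Fin.last m)
    (Finset.mem_univ _), leftNormedSpan_univ_eq_span_range]
end
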